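/- Let G = 1 − X^k·G₁ over a field K with k ≥ 1, and let φ = 1/G ∈ K[[X]] be its power series inverse. Then for all t ≥ 1, the support of φ mod X^{kt} is contained in the set S = { e₁ + ⋯ + e_{t−1} : each e_j ∈ supp(G) } of sums of t−1 exponents from the support of G. -/

import Mathlib

open Finset
open scoped Pointwise

/-
Since `G = 1 - h` with `h = X^k G₁` and `(1 - h) ∑_{i<t} hⁱ = 1 - hᵗ`, the series `1/G` agrees with the
polynomial `∑_{i<t} hⁱ` modulo `X^{kt}`. Every exponent of `hⁱ` is a sum of `i` exponents of `h`, and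
the exponents of `h` are exponents of `G`; since `0 ∈ supp G`, a sum of `i ≤ t - 1` of them can be
padded with zeros to a sum of exactly `t - 1`.
-/

namespace PowerSeries

theorem coeff_inv_one_sub_eq_coeff_geom_sum {K : Type*} [Field K] {h : PowerSeries K}
    (h0 : constantCoeff h = 0) {m t e : ℕ} (hdvd : X ^ m ∣ h ^ t) (he : e < m) :
    coeff e (1 - h)⁻¹ = coeff e (∑ i ∈ range t, h ^ i) := by
  have hinv : (1 - h)⁻¹ * (1 - h) = 1 := PowerSeries.inv_mul_cancel _ (by simp [h0])
  have hsplit : (1 - h)⁻¹ = ∑ i ∈ range t, h ^ i + (1 - h)⁻¹ * h ^ t := by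
    calc (1 - h)⁻¹ = (1 - h)⁻¹ * ((1 - h) * ∑ i ∈ range t, h ^ i + h ^ t) := by
          rw [mul_neg_geom_sum, sub_add_cancel, mul_one]
      _ = ∑ i ∈ range t, h ^ i + (1 - h)⁻¹ * h ^ t := by
          rw [mul_add, ← mul_assoc, hinv, one_mul]
  rw [hsplit, map_add, X_pow_dvd_iff.mp (hdvd.mul_left _) e he, add_zero]

end PowerSeries

namespace Polynomial

variable {R : Type*}

theorem support_mul_subset_add [Semiring R] (p q : R[X]) :
    ((p * q).support : Set ℕ) ⊆ p.support + q.support := by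
  intro e he
  rw [mem_coe, mem_support_iff, coeff_mul] at he
  obtain ⟨⟨a, b⟩, hab, hne⟩ := exists_ne_zero_of_sum_ne_zero he
  exact ⟨a, mem_support_iff.mpr (left_ne_zero_of_mul hne), b,
    mem_support_iff.mpr (right_ne_zero_of_mul hne), mem_antidiagonal.mp hab⟩

theorem support_pow_subset_nsmul [Semiring R] (p : R[X]) :
    ∀ n : ℕ, ((p ^ n).support : Set ℕ) ⊆ n • (p.support : Set ℕ)
  | 0 => by
    intro e he
    rw [pow_zero] at he
    rw [zero_smul, Set.mem_zero]
    by_contra he0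
    exact mem_support_iff.mp he (coeff_one.trans (if_neg he0))
  | n + 1 => by
    rw [pow_succ, succ_nsmul]
    exact (support_mul_subset_add _ _).trans
      (Set.add_subset_add (support_pow_subset_nsmul p n) subset_rfl)

theorem support_geom_sum_subset_nsmul [Semiring R] {p : R[X]} {s : Set ℕ} (hs : 0 ∈ s)
    (hp : (p.support : Set ℕ) ⊆ s) (t : ℕ) :
    ((∑ i ∈ range t, p ^ i).support : Set ℕ) ⊆ (t - 1) • s := by
  intro e he
  rw [mem_coe, mem_support_iff, finsetSum_coeff] at he
  obtain ⟨i, hi, hne⟩ := exists_ne_zero_of_sum_ne_zero he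
  have hit : i ≤ t - 1 := Nat.le_sub_one_of_lt (mem_range.mp hi)
  exact Set.nsmul_subset_nsmul hp hs hit
    (support_pow_subset_nsmul p i (mem_support_iff.mpr hne))

theorem support_subset_support_one_sub [Ring R] {p : R[X]} (hp : p.coeff 0 = 0) :
    p.support ⊆ (1 - p).support := by
  intro e he
  have he0 : e ≠ 0 := by rintro rfl; exact mem_support_iff.mp he hp
  simpa [coeff_one, he0] using he

theorem zero_mem_support_one_sub [Ring R] [Nontrivial R] {p : R[X]} (hp : p.coeff 0 = 0) :
    0 ∈ (1 - p).support := by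
  simp [hp]

end Polynomial

open Polynomial

theorem stmt5_general {K : Type*} [Field K] (G G₁ : K[X]) (k t : ℕ) (hk : 1 ≤ k)
    (hG : G = 1 - X ^ k * G₁) :
    ∀ e ∈ (PowerSeries.trunc (k * t) ((G : PowerSeries K)⁻¹)).support,
      ∃ f : Fin (t - 1) → ℕ, (∀ j, f j ∈ G.support) ∧ e = ∑ j, f j := by
  intro e he
  subst hG
  set h : K[X] := X ^ k * G₁ with hh
  have h0 : h.coeff 0 = 0 := by simp [hh, coeff_X_pow, (Nat.one_le_iff_ne_zero.mp hk).symm]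
  have hdvd : PowerSeries.X ^ (k * t) ∣ (h : PowerSeries K) ^ t :=
    ⟨(G₁ : PowerSeries K) ^ t, by simp [hh, mul_pow, pow_mul]⟩
  rw [mem_support_iff, PowerSeries.coeff_trunc] at he
  have he_lt : e < k * t := by
    by_contra h_ge
    simp [h_ge] at he
  have hcast : ((∑ i ∈ range t, h ^ i : K[X]) : PowerSeries K) =
      ∑ i ∈ range t, (h : PowerSeries K) ^ i := by
    simp only [← coeToPowerSeries.ringHom_apply, map_sum, map_pow]
  rw [if_pos he_lt, Polynomial.coe_sub, Polynomial.coe_one,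
    PowerSeries.coeff_inv_one_sub_eq_coeff_geom_sum (by simpa using h0) hdvd he_lt, ← hcast,
    coeff_coe, ← mem_support_iff] at he
  obtain ⟨f, hf, hsum⟩ := Set.mem_nsmul_iff_sum.mp <|
    support_geom_sum_subset_nsmul (zero_mem_support_one_sub h0)
      (coe_subset.mpr (support_subset_support_one_sub h0)) t he
  exact ⟨f, hf, hsum.symm⟩

theorem stmt5 {K : Type*} [Field K] (G G₁ : K[X]) (k t : ℕ) (hk : 1 ≤ k) (ht : 1 ≤ t)
    (hG : G = 1 - X ^ k * G₁) :
    ∀ e ∈ (PowerSeries.trunc (k * t) ((G : PowerSeries K)⁻¹)).support,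
      ∃ f : Fin (t - 1) → ℕ, (∀ j, f j ∈ G.support) ∧ e = ∑ j, f j :=
  stmt5_general G G₁ k t hk hG
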